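/- Let k be algebraically closed with char k ≠ 2, 3, let h_a = Diag(1, 1/a, 1/a²) ∈ PGL(3, k) for a ∈ k^×, and let z₁₁ = (V(x₀²x₂ + x₁²(x₀ + x₁)), V(x₂)). Then h_a · z₁₁ = (V(x₀²x₂ + x₁²(x₀ + a x₁)), V(x₂)), and as a → 0 this family converges in ℙ(S³V) × ℙ(V) to z₇ = (V(x₀(x₀x₂ + x₁²)), V(x₂)). -/

import Mathlib

/-! The substitution `x₀ ↦ x₀, x₁ ↦ a x₁, x₂ ↦ a² x₂` gives `x₁, x₂` the weights `1, 2`: the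
monomials `x₀²x₂` and `x₀x₁²` pick up `a²` while `x₁³` picks up `a³`, so after dividing by `a²`
the parameter survives only on `x₁³`, and setting it to `0` leaves `x₀(x₀x₂ + x₁²)`. -/

open MvPolynomial

section WeightedScaling

variable {R : Type*} [CommSemiring R] (a : R)

theorem aeval_weightedScaling_cuspidalCubic :
    aeval (R := R) (![X 0, C a * X 1, C (a ^ 2) * X 2] : Fin 3 → MvPolynomial (Fin 3) R)
        (X 0 ^ 2 * X 2 + X 1 ^ 2 * (X 0 + X 1))
      = a ^ 2 • (X 0 ^ 2 * X 2 + X 1 ^ 2 * (X 0 + C a * X 1)) := by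
  simp only [map_add, map_mul, map_pow, aeval_X, smul_eq_C_mul, Matrix.cons_val]
  ring

theorem aeval_weightedScaling_X_two :
    aeval (R := R) (![X 0, C a * X 1, C (a ^ 2) * X 2] : Fin 3 → MvPolynomial (Fin 3) R)
        (X 2 : MvPolynomial (Fin 3) R)
      = a ^ 2 • (X 2 : MvPolynomial (Fin 3) R) := by
  simp [smul_eq_C_mul]

end WeightedScaling

theorem stmt8 {k : Type*} [Field k] :
    (∀ a : k, a ≠ 0 →
      ∃ c d : k, c ≠ 0 ∧ d ≠ 0 ∧
        aeval (R := k) (![X 0, C a * X 1, C (a ^ 2) * X 2] : Fin 3 → MvPolynomial (Fin 3) k)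
            (X 0 ^ 2 * X 2 + X 1 ^ 2 * (X 0 + X 1))
          = c • (X 0 ^ 2 * X 2 + X 1 ^ 2 * (X 0 + C a * X 1)) ∧
        aeval (R := k) (![X 0, C a * X 1, C (a ^ 2) * X 2] : Fin 3 → MvPolynomial (Fin 3) k)
            (X 2 : MvPolynomial (Fin 3) k)
          = d • (X 2 : MvPolynomial (Fin 3) k)) ∧
    (fun a : k => X 0 ^ 2 * X 2 + X 1 ^ 2 * (X 0 + C a * X 1) : k → MvPolynomial (Fin 3) k) 0
      = X 0 * (X 0 * X 2 + X 1 ^ 2) := by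
  refine ⟨fun a ha => ⟨a ^ 2, a ^ 2, pow_ne_zero 2 ha, pow_ne_zero 2 ha,
    aeval_weightedScaling_cuspidalCubic a, aeval_weightedScaling_X_two a⟩, ?_⟩
  simp only [map_zero, zero_mul, add_zero]
  ring
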